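/- There exists a sequence (α_i)_{i ≥ 1} with α_i ∈ {0,1} such that the function f(ε) = ∑_{i=1}^∞ α_i sin²(iε/2)/(i² ε) has no limit as ε → 0+; more precisely, there exist sequences ε_n ↓ 0 and ε'_n ↓ 0 with f(ε_n) > 1/2 for all n and f(ε'_n) < 1/4 for all n. -/

import Mathlib

/-!
Since `sin² (n x / 2) = (1 - cos (n x)) / 2`, the Fourier series of `cos (n x) / n²` gives
`∑ sin² (n ε / 2) / (n² ε) = (2π - ε) / 8`, about `π / 4 > 1 / 2` for small `ε`, while each term
is at most `ε / 4`. So at the scale `ε = 1 / (4 (N + 1))` the first `N` terms carry at most `1 / 16`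
of the mass, and beyond some `M > N` the remainder is below `1 / 16` as well. Iterating `N ↦ M`
gives indices `N₀ < N₁ < ⋯`; with `α = 1` exactly on the blocks `[N_{2j}, N_{2j+1})`, the sum is
close to the full mass at the scales of the `N_{2j}` and at most `1 / 8` at those of the `N_{2j+1}`.
-/

open Real Filter Finset

theorem tsum_indicator_le_of_disjoint_Ico {f : ℕ → ℝ} {s : ℝ} (hf : HasSum f s) (hf0 : 0 ≤ f)
    {S : Set ℕ} {m n : ℕ} (hmn : m ≤ n) (hS : Disjoint (Set.Ico m n) S) :
    ∑' i, S.indicator f i ≤ ∑ i ∈ range m, f i + (s - ∑ i ∈ range n, f i) := by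
  have hle : S.indicator f ≤ f := fun i => Set.indicator_le_self' (fun _ _ => hf0 _) i
  have hg : Summable (S.indicator f) := hf.summable.indicator S
  have hhead : ∑ i ∈ range n, S.indicator f i ≤ ∑ i ∈ range m, f i := by
    have hgap : ∑ i ∈ Ico m n, S.indicator f i = 0 := sum_eq_zero fun i hi =>
      Set.indicator_of_notMem (hS.notMem_of_mem_left (by simpa using hi)) f
    rw [← sum_range_add_sum_Ico _ hmn, hgap, add_zero]
    exact sum_le_sum fun i _ => hle i
  have htail : ∑' i, S.indicator f (i + n) ≤ s - ∑ i ∈ range n, f i := by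
    rw [← hf.tsum_eq, ← hf.summable.sum_add_tsum_nat_add n, add_sub_cancel_left]
    exact ((summable_nat_add_iff n).2 hg).tsum_le_tsum (fun i => hle _)
      ((summable_nat_add_iff n).2 hf.summable)
  rw [← hg.sum_add_tsum_nat_add n]
  exact add_le_add hhead htail

theorem sum_Ico_le_tsum_indicator {f : ℕ → ℝ} (hf : Summable f) (hf0 : 0 ≤ f) {S : Set ℕ}
    {m n : ℕ} (hS : Set.Ico m n ⊆ S) :
    ∑ i ∈ Ico m n, f i ≤ ∑' i, S.indicator f i := by
  have hsum : ∑ i ∈ Ico m n, f i = ∑ i ∈ Ico m n, S.indicator f i :=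
    sum_congr rfl fun i hi => (Set.indicator_of_mem (hS (by simpa using hi)) f).symm
  rw [hsum]
  exact (hf.indicator S).sum_le_tsum _ fun i _ => Set.indicator_nonneg (fun j _ => hf0 j) i

theorem hasSum_sin_sq_div_sq {x : ℝ} (hx0 : 0 ≤ x) (hx : x ≤ 2 * π) :
    HasSum (fun n : ℕ => sin (n * x / 2) ^ 2 / (n : ℝ) ^ 2) (x * (2 * π - x) / 8) := by
  have hy : x / (2 * π) ∈ Set.Icc (0 : ℝ) 1 :=
    ⟨by positivity, (div_le_one (by positivity)).2 hx⟩
  have hcos := hasSum_one_div_nat_pow_mul_cos one_ne_zero hy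
  have hB : (Polynomial.map (algebraMap ℚ ℝ) (Polynomial.bernoulli 2)).eval (x / (2 * π))
      = (x / (2 * π)) ^ 2 - x / (2 * π) + 1 / 6 := by
    simp [Polynomial.bernoulli, Finset.sum_range_succ, bernoulli_eq_bernoulli'_of_ne_one,
      bernoulli'_two]
    ring
  simp only [mul_one, hB, Nat.factorial_two] at hcos
  have hterm (n : ℕ) : sin (n * x / 2) ^ 2 / (n : ℝ) ^ 2
      = (1 / (n : ℝ) ^ 2 - 1 / (n : ℝ) ^ 2 * cos (2 * π * n * (x / (2 * π)))) / 2 := by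
    have harg : 2 * π * n * (x / (2 * π)) = 2 * (n * x / 2) := by field_simp
    rw [sin_sq_eq_half_sub, harg]
    ring
  have hsum : x * (2 * π - x) / 8 = (π ^ 2 / 6 - (-1) ^ (1 + 1) * (2 * π) ^ 2 / 2 / (2 : ℕ) *
      ((x / (2 * π)) ^ 2 - x / (2 * π) + 1 / 6)) / 2 := by
    field_simp
    ring
  simpa only [hterm, hsum] using (hasSum_zeta_two.sub hcos).div_const 2

noncomputable def sinSqTerm (ε : ℝ) (i : ℕ) : ℝ :=
  sin ((i + 1) * ε / 2) ^ 2 / (((i : ℝ) + 1) ^ 2 * ε)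

section sinSqTerm

variable {ε : ℝ}

theorem sinSqTerm_nonneg (hε : 0 < ε) : 0 ≤ sinSqTerm ε := fun i => by
  unfold sinSqTerm; positivity

theorem sinSqTerm_le (hε : 0 < ε) (i : ℕ) : sinSqTerm ε i ≤ ε / 4 := by
  have hsin : sin ((i + 1) * ε / 2) ^ 2 ≤ ((i + 1) * ε / 2) ^ 2 := by
    rw [← sq_abs (sin _), ← sq_abs ((i + 1) * ε / 2)]
    exact pow_le_pow_left₀ (abs_nonneg _) abs_sin_le_abs 2
  rw [sinSqTerm, div_le_iff₀ (by positivity)]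
  linarith

theorem sum_range_sinSqTerm_le (hε : 0 < ε) (N : ℕ) :
    ∑ i ∈ range N, sinSqTerm ε i ≤ N * ε / 4 := by
  calc ∑ i ∈ range N, sinSqTerm ε i ≤ ∑ _i ∈ range N, ε / 4 :=
        sum_le_sum fun i _ => sinSqTerm_le hε i
    _ = N * ε / 4 := by rw [sum_const, card_range, nsmul_eq_mul, mul_div_assoc]

theorem hasSum_sinSqTerm (hε : 0 < ε) (hε' : ε ≤ 2 * π) :
    HasSum (sinSqTerm ε) ((2 * π - ε) / 8) := by
  have h := (hasSum_nat_add_iff' 1).2 (hasSum_sin_sq_div_sq hε.le hε')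
  simp only [range_one, sum_singleton, Nat.cast_zero, zero_mul, zero_div, sin_zero,
    ne_eq, OfNat.ofNat_ne_zero, not_false_eq_true, zero_pow, sub_zero, Nat.cast_add,
    Nat.cast_one] at h
  have hval : ε * (2 * π - ε) / 8 / ε = (2 * π - ε) / 8 := by field_simp
  rw [← hval]
  exact (h.div_const ε).congr_fun fun i => (div_div _ _ _).symm

end sinSqTerm

noncomputable def scale (N : ℕ) : ℝ := 1 / (N + 1) / 4

theorem scale_pos (N : ℕ) : 0 < scale N := by unfold scale; positivity

theorem scale_le_one_quarter (N : ℕ) : scale N ≤ 1 / 4 := by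
  unfold scale
  gcongr
  exact div_le_one_of_le₀ (by linarith [N.cast_nonneg (α := ℝ)]) (by positivity)

theorem scale_le_two_pi (N : ℕ) : scale N ≤ 2 * π := by
  linarith [scale_le_one_quarter N, pi_gt_three]

theorem strictAnti_scale : StrictAnti scale := fun m n hmn => by
  unfold scale
  gcongr

theorem tendsto_scale : Tendsto scale atTop (nhds 0) := by
  have h := tendsto_one_div_add_atTop_nhds_zero_nat.div_const (4 : ℝ)
  rwa [zero_div] at h

theorem sum_range_sinSqTerm_scale_le (N : ℕ) :
    ∑ i ∈ range N, sinSqTerm (scale N) i ≤ 1 / 16 := by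
  have hN : (N : ℝ) * scale N ≤ 1 / 4 := by
    rw [scale, ← mul_div_assoc, mul_one_div]
    gcongr
    exact div_le_one_of_le₀ (by linarith) (by positivity)
  linarith [sum_range_sinSqTerm_le (scale_pos N) N]

theorem exists_sub_sum_range_sinSqTerm_scale_le (N : ℕ) :
    ∃ M, N < M ∧ (2 * π - scale N) / 8 - ∑ i ∈ range M, sinSqTerm (scale N) i ≤ 1 / 16 := by
  have h := (hasSum_sinSqTerm (scale_pos N) (scale_le_two_pi N)).tendsto_sum_nat
  obtain ⟨M, hM, hNM⟩ :=
    ((h.eventually_const_le (by norm_num : (2 * π - scale N) / 8 - 1 / 16 < _)).and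
      (eventually_gt_atTop N)).exists
  exact ⟨M, hNM, by linarith⟩

noncomputable def nextKnot (N : ℕ) : ℕ := (exists_sub_sum_range_sinSqTerm_scale_le N).choose

noncomputable def knot (k : ℕ) : ℕ := nextKnot^[k] 0

theorem knot_succ (k : ℕ) : knot (k + 1) = nextKnot (knot k) :=
  Function.iterate_succ_apply' _ _ _

theorem lt_knot_succ (k : ℕ) : knot k < knot (k + 1) :=
  knot_succ k ▸ (exists_sub_sum_range_sinSqTerm_scale_le _).choose_spec.1

theorem sub_sum_range_knot_succ_le (k : ℕ) :
    (2 * π - scale (knot k)) / 8 - ∑ i ∈ range (knot (k + 1)), sinSqTerm (scale (knot k)) i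
      ≤ 1 / 16 :=
  knot_succ k ▸ (exists_sub_sum_range_sinSqTerm_scale_le _).choose_spec.2

theorem strictMono_knot : StrictMono knot := strictMono_nat_of_lt_succ lt_knot_succ

def evenBlocks (N : ℕ → ℕ) : Set ℕ := ⋃ j, Set.Ico (N (2 * j)) (N (2 * j + 1))

theorem Ico_subset_evenBlocks (N : ℕ → ℕ) (j : ℕ) :
    Set.Ico (N (2 * j)) (N (2 * j + 1)) ⊆ evenBlocks N :=
  Set.subset_iUnion (fun j => Set.Ico (N (2 * j)) (N (2 * j + 1))) j

theorem disjoint_Ico_evenBlocks {N : ℕ → ℕ} (hN : Monotone N) (j : ℕ) :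
    Disjoint (Set.Ico (N (2 * j + 1)) (N (2 * j + 2))) (evenBlocks N) := by
  refine Set.disjoint_left.2 fun i ⟨hi₁, hi₂⟩ hi => ?_
  obtain ⟨l, hl₁, hl₂⟩ := Set.mem_iUnion.1 hi
  rcases le_or_gt l j with hlj | hjl
  · exact absurd (hl₂.trans_le (hN (by omega))) (not_lt.2 hi₁)
  · exact absurd ((hN (by omega)).trans hl₁) (not_le.2 hi₂)

theorem one_half_lt_tsum_indicator_evenBlocks (j : ℕ) :
    1 / 2 < ∑' i, (evenBlocks knot).indicator (sinSqTerm (scale (knot (2 * j)))) i := by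
  set ε := scale (knot (2 * j))
  have hf := hasSum_sinSqTerm (scale_pos _) (scale_le_two_pi (knot (2 * j)))
  have hhead := sum_range_sinSqTerm_scale_le (knot (2 * j))
  have htail := sub_sum_range_knot_succ_le (2 * j)
  have hε := scale_le_one_quarter (knot (2 * j))
  calc 1 / 2 < ∑ i ∈ range (knot (2 * j + 1)), sinSqTerm ε i
        - ∑ i ∈ range (knot (2 * j)), sinSqTerm ε i := by linarith [pi_gt_three]
    _ = ∑ i ∈ Ico (knot (2 * j)) (knot (2 * j + 1)), sinSqTerm ε i :=
        (sum_Ico_eq_sub _ (lt_knot_succ _).le).symm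
    _ ≤ _ := sum_Ico_le_tsum_indicator hf.summable (sinSqTerm_nonneg (scale_pos _))
        (Ico_subset_evenBlocks knot j)

theorem tsum_indicator_evenBlocks_lt_one_quarter (j : ℕ) :
    ∑' i, (evenBlocks knot).indicator (sinSqTerm (scale (knot (2 * j + 1)))) i < 1 / 4 := by
  have hf := hasSum_sinSqTerm (scale_pos _) (scale_le_two_pi (knot (2 * j + 1)))
  have hhead := sum_range_sinSqTerm_scale_le (knot (2 * j + 1))
  have htail := sub_sum_range_knot_succ_le (2 * j + 1)
  have := tsum_indicator_le_of_disjoint_Ico hf (sinSqTerm_nonneg (scale_pos _))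
    (lt_knot_succ _).le (disjoint_Ico_evenBlocks strictMono_knot.monotone j)
  linarith

theorem stmt_8 :
    ∃ α : ℕ → ℝ, (∀ i, α i = 0 ∨ α i = 1) ∧
      ∃ ε ε' : ℕ → ℝ,
        StrictAnti ε ∧ StrictAnti ε' ∧
        (∀ n, 0 < ε n) ∧ (∀ n, 0 < ε' n) ∧
        Tendsto ε atTop (nhds 0) ∧ Tendsto ε' atTop (nhds 0) ∧
        (∀ n, (1:ℝ)/2 <
          ∑' i : ℕ, α (i+1) * Real.sin ((i+1) * ε n / 2) ^ 2 / (((i:ℝ)+1) ^ 2 * ε n)) ∧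
        (∀ n,
          (∑' i : ℕ, α (i+1) * Real.sin ((i+1) * ε' n / 2) ^ 2 / (((i:ℝ)+1) ^ 2 * ε' n))
            < 1/4) := by
  -- `α (i + 1)` weights the term `sinSqTerm ε i`; `α 0` never enters the sums.
  set α : ℕ → ℝ := fun i => (evenBlocks knot).indicator 1 (i - 1)
  have hsummand (ε : ℝ) (i : ℕ) : α (i + 1) * sin ((i + 1) * ε / 2) ^ 2 / (((i : ℝ) + 1) ^ 2 * ε)
      = (evenBlocks knot).indicator (sinSqTerm ε) i := by
    by_cases h : i ∈ evenBlocks knot <;> simp [α, h, sinSqTerm, mul_div_assoc]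
  have heven : StrictMono fun n => knot (2 * n) := strictMono_knot.comp fun m n h => by omega
  have hodd : StrictMono fun n => knot (2 * n + 1) := strictMono_knot.comp fun m n h => by omega
  refine ⟨α, fun i => ?_, _, _, strictAnti_scale.comp_strictMono heven,
    strictAnti_scale.comp_strictMono hodd, fun n => scale_pos _, fun n => scale_pos _,
    tendsto_scale.comp heven.tendsto_atTop, tendsto_scale.comp hodd.tendsto_atTop,
    fun n => ?_, fun n => ?_⟩
  · by_cases h : i - 1 ∈ evenBlocks knot <;> simp [α, h]
  · simpa only [hsummand, Function.comp_apply] using one_half_lt_tsum_indicator_evenBlocks n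
  · simpa only [hsummand, Function.comp_apply] using tsum_indicator_evenBlocks_lt_one_quarter n
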